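/- Conformal map from the hyperbolic to the spherical Einstein universe: under the coordinate change $\tau = -\ell\arctan(\cosh\theta/\sinh(t/\ell))$, $\Theta = \arctan(\sinh\theta/\cosh(t/\ell))$, $\Phi = \varphi$, restricted to the region where $\tau \in (-\ell\pi/2, 0)$ and $\Theta \in (0, -\tau/\ell)$, the metric $-dt^2 + \ell^2(d\theta^2 + \sinh^2\theta\, d\varphi^2)$ on $\mathbb{R}\times H^2$ is mapped, after multiplication by the conformal factor $\Omega^2 = \cos^2\Theta - \cos^2(\tau/\ell)$, to the metric $-d\tau^2 + \ell^2(d\Theta^2 + \sin^2\Theta\, d\Phi^2)$ of $\mathbb{R}\times S^2$. -/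

import Mathlib

/-!
Write `s, c = sinh, cosh (t/ℓ)` and `S, C = sinh, cosh θ`. Since `c² - s² = C² - S² = 1`, both
arctangents have the same hypotenuse `D = s² + C² = c² + S²`, so `cos²Θ = c²/D`,
`cos²(τ/ℓ) = s²/D`, `sin²Θ = S²/D` and `Ω² = 1/D`. Differentiating, `D dτ = cC dt - ℓ sS dθ` and
`D ℓ dΘ = ℓ cC dθ - sS dt`: the cross terms cancel in `-dτ² + ℓ² dΘ²`, and `c²C² - s²S² = D`
turns it into `(-dt² + ℓ² dθ²)/D`.
-/

noncomputable section

open Real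

/-- The map (t,θ,φ) ↦ (τ,Θ,Φ) with τ = -ℓ arctan(cosh θ/sinh(t/ℓ)),
Θ = arctan(sinh θ/cosh(t/ℓ)), Φ = φ. -/
def hypToSphMap (ℓ : ℝ) (x : Fin 3 → ℝ) : Fin 3 → ℝ :=
  ![-(ℓ * Real.arctan (Real.cosh (x 1) / Real.sinh (x 0 / ℓ))),
    Real.arctan (Real.sinh (x 1) / Real.cosh (x 0 / ℓ)),
    x 2]

theorem HasFDerivAt.arctan_div {E : Type*} [NormedAddCommGroup E] [NormedSpace ℝ E]
    {f g : E → ℝ} {f' g' : E →L[ℝ] ℝ} {x : E} (hf : HasFDerivAt f f' x) (hg : HasFDerivAt g g' x)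
    (hgx : g x ≠ 0) :
    HasFDerivAt (fun y => Real.arctan (f y / g y))
      ((f x ^ 2 + g x ^ 2)⁻¹ • (g x • f' - f x • g')) x := by
  have hquot : HasFDerivAt (fun y => f y / g y) (f x • (-(g x ^ 2)⁻¹ • g') + (g x)⁻¹ • f') x := by
    simpa only [div_eq_mul_inv, Function.comp_def] using
      hf.fun_mul ((hasDerivAt_inv hgx).comp_hasFDerivAt x hg)
  convert hquot.arctan using 1
  ext v
  simp only [smul_apply, sub_apply, add_apply, smul_eq_mul]
  field_simp
  ring

theorem Real.cos_sq_arctan_div (a : ℝ) {b : ℝ} (hb : b ≠ 0) :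
    cos (arctan (a / b)) ^ 2 = b ^ 2 / (a ^ 2 + b ^ 2) := by
  rw [cos_sq_arctan]
  field_simp
  ring

theorem Real.sin_sq_arctan_div (a : ℝ) {b : ℝ} (hb : b ≠ 0) :
    sin (arctan (a / b)) ^ 2 = a ^ 2 / (a ^ 2 + b ^ 2) := by
  have : a ^ 2 + b ^ 2 ≠ 0 := by positivity
  rw [sin_sq, cos_sq_arctan_div a hb]
  field_simp
  ring

theorem hasFDerivAt_apply_div {ι : Type*} [Fintype ι] (ℓ : ℝ) (i : ι) (x : ι → ℝ) :
    HasFDerivAt (fun z : ι → ℝ => z i / ℓ)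
      (ℓ⁻¹ • ContinuousLinearMap.proj (R := ℝ) (φ := fun _ : ι => ℝ) i) x := by
  simpa only [div_eq_mul_inv] using
    (hasFDerivAt_apply (𝕜 := ℝ) (F' := fun _ => ℝ) i x).mul_const ℓ⁻¹

theorem conformal_pullback_identity {ℓ a b c d u w t : ℝ} (hℓ : ℓ ≠ 0)
    (hab : b ^ 2 = a ^ 2 + 1) (hcd : d ^ 2 = c ^ 2 + 1) :
    -((b * d * u - ℓ * a * c * w) / (d ^ 2 + a ^ 2)) ^ 2
        + ℓ ^ 2 * (((b * d * w - a * c * u / ℓ) / (c ^ 2 + b ^ 2)) ^ 2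
          + c ^ 2 / (c ^ 2 + b ^ 2) * t ^ 2)
      = (b ^ 2 / (c ^ 2 + b ^ 2) - a ^ 2 / (d ^ 2 + a ^ 2))
          * (-u ^ 2 + ℓ ^ 2 * (w ^ 2 + c ^ 2 * t ^ 2)) := by
  have hD : d ^ 2 + a ^ 2 = c ^ 2 + b ^ 2 := by linear_combination hcd - hab
  have hD0 : c ^ 2 + b ^ 2 ≠ 0 := by nlinarith
  rw [hD]
  field_simp
  linear_combination (ℓ ^ 2 * w ^ 2 - u ^ 2) * b ^ 2 * (hcd - hab)
    - ℓ ^ 2 * c ^ 2 * t ^ 2 * (c ^ 2 + b ^ 2) * hab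

theorem hypToSphMap_zero_div {ℓ : ℝ} (hℓ : ℓ ≠ 0) (x : Fin 3 → ℝ) :
    hypToSphMap ℓ x 0 / ℓ = -arctan (cosh (x 1) / sinh (x 0 / ℓ)) := by
  rw [hypToSphMap, Matrix.cons_val_zero, neg_div, mul_div_cancel_left₀ _ hℓ]

theorem hypToSphMap_one (ℓ : ℝ) (x : Fin 3 → ℝ) :
    hypToSphMap ℓ x 1 = arctan (sinh (x 1) / cosh (x 0 / ℓ)) := rfl

theorem fderiv_hypToSphMap_zero_apply {ℓ : ℝ} (hℓ : ℓ ≠ 0) {x : Fin 3 → ℝ} (hx : x 0 ≠ 0)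
    (v : Fin 3 → ℝ) :
    fderiv ℝ (fun z => hypToSphMap ℓ z 0) x v =
      (cosh (x 0 / ℓ) * cosh (x 1) * v 0 - ℓ * sinh (x 0 / ℓ) * sinh (x 1) * v 1) /
        (cosh (x 1) ^ 2 + sinh (x 0 / ℓ) ^ 2) := by
  have hnum := (hasFDerivAt_apply (𝕜 := ℝ) (F' := fun _ => ℝ) 1 x).cosh
  have hden := (hasFDerivAt_apply_div ℓ 0 x).sinh
  have hsinh : sinh (x 0 / ℓ) ≠ 0 := sinh_ne_zero.2 (div_ne_zero hx hℓ)
  have h : HasFDerivAt (fun z => hypToSphMap ℓ z 0) _ x :=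
    ((hnum.arctan_div hden hsinh).const_mul ℓ).fun_neg
  rw [h.fderiv]
  simp only [neg_apply, smul_apply, sub_apply, ContinuousLinearMap.proj_apply, smul_eq_mul]
  field_simp
  ring

theorem fderiv_hypToSphMap_one_apply (ℓ : ℝ) (x v : Fin 3 → ℝ) :
    fderiv ℝ (fun z => hypToSphMap ℓ z 1) x v =
      (cosh (x 0 / ℓ) * cosh (x 1) * v 1 - sinh (x 0 / ℓ) * sinh (x 1) * v 0 / ℓ) /
        (sinh (x 1) ^ 2 + cosh (x 0 / ℓ) ^ 2) := by
  have hnum := (hasFDerivAt_apply (𝕜 := ℝ) (F' := fun _ => ℝ) 1 x).sinh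
  have hden := (hasFDerivAt_apply_div ℓ 0 x).cosh
  have h : HasFDerivAt (fun z => hypToSphMap ℓ z 1) _ x :=
    hnum.arctan_div hden (cosh_pos _).ne'
  rw [h.fderiv]
  simp only [smul_apply, sub_apply, ContinuousLinearMap.proj_apply, smul_eq_mul]
  field_simp

theorem fderiv_hypToSphMap_two_apply (ℓ : ℝ) (x v : Fin 3 → ℝ) :
    fderiv ℝ (fun z => hypToSphMap ℓ z 2) x v = v 2 := by
  have h : HasFDerivAt (fun z => hypToSphMap ℓ z 2) _ x :=
    hasFDerivAt_apply (𝕜 := ℝ) (F' := fun _ => ℝ) 2 x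
  rw [h.fderiv]
  rfl

/-- **Conformal map from ℝ×H² to ℝ×S².** On the region t > 0 (so that
τ ∈ (-ℓπ/2,0) and Θ ∈ [0, -τ/ℓ)), the pullback of the Einstein static universe
metric -dτ² + ℓ²(dΘ² + sin²Θ dΦ²) under the map equals
Ω²(-dt² + ℓ²(dθ² + sinh²θ dφ²)) with Ω² = cos²Θ - cos²(τ/ℓ). -/
theorem hyperbolic_to_sphere_conformal (ℓ : ℝ) (hℓ : 0 < ℓ) :
    ∀ x : Fin 3 → ℝ, 0 < x 0 →
      ∀ v : Fin 3 → ℝ,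
        -(fderiv ℝ (fun z => hypToSphMap ℓ z 0) x v) ^ 2
            + ℓ ^ 2 * ((fderiv ℝ (fun z => hypToSphMap ℓ z 1) x v) ^ 2
              + Real.sin (hypToSphMap ℓ x 1) ^ 2 *
                  (fderiv ℝ (fun z => hypToSphMap ℓ z 2) x v) ^ 2)
          = (Real.cos (hypToSphMap ℓ x 1) ^ 2
              - Real.cos (hypToSphMap ℓ x 0 / ℓ) ^ 2) *
            (-(v 0) ^ 2 + ℓ ^ 2 * ((v 1) ^ 2 + Real.sinh (x 1) ^ 2 * (v 2) ^ 2)) := by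
  intro x hx v
  have hsinh : sinh (x 0 / ℓ) ≠ 0 := sinh_ne_zero.2 (div_pos hx hℓ).ne'
  have hcosh : cosh (x 0 / ℓ) ≠ 0 := (cosh_pos _).ne'
  rw [fderiv_hypToSphMap_zero_apply hℓ.ne' hx.ne', fderiv_hypToSphMap_one_apply,
    fderiv_hypToSphMap_two_apply, hypToSphMap_zero_div hℓ.ne', cos_neg,
    cos_sq_arctan_div _ hsinh, hypToSphMap_one, sin_sq_arctan_div _ hcosh,
    cos_sq_arctan_div _ hcosh]
  exact conformal_pullback_identity hℓ.ne' (cosh_sq _) (cosh_sq _)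

end
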